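/- Let f ≥ 1 and let d_0 ∈ S_{2f} be the permutation defined by (a)d_0 = (a+1)/2 if a is odd and (a)d_0 = 2f + 1 - a/2 if a is even. Then ℓ(d_0) = f(f-1), and the word (s_{2f-2}s_{2f-1})(s_{2f-4}s_{2f-3}s_{2f-2}s_{2f-1}) ··· (s_2 s_3 ··· s_{2f-2}s_{2f-1}) is a reduced expression of d_0. -/

import Mathlib

/-!
STATEMENT 4.  0-based conventions in `Equiv.Perm ℕ`; the paper's 1-based
`(a)d_0 = (a+1)/2` (a odd), `(a)d_0 = 2f+1-a/2` (a even) becomes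
`d0 (2k) = k`, `d0 (2k+1) = 2f-1-k` for `k < f`, with `d0` fixing `x ≥ 2f`.
The paper's word
`(s_{2f-2}s_{2f-1})(s_{2f-4}s_{2f-3}s_{2f-2}s_{2f-1})⋯(s_2 s_3⋯s_{2f-2}s_{2f-1})`
is the letter list `word4 f` (0-based letters, the segment for
`k = 1,…,f-1` being `s_{2f-2k},…,s_{2f-1}`, i.e. 0-based
`2f-2k-1,…,2f-2`).  Since the paper composes left-to-right, the
corresponding Mathlib product is over the reversed list.  Reducedness is
expressed by `len d0 = f(f-1) =` number of letters.
-/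

noncomputable section

def sw (a : ℕ) : Equiv.Perm ℕ := Equiv.swap a (a + 1)

noncomputable def len (σ : Equiv.Perm ℕ) : ℕ :=
  Set.ncard {p : ℕ × ℕ | p.1 < p.2 ∧ σ p.2 < σ p.1}

/-- The paper's word for `d_0`, as its list of 0-based letters read left to
right: for `j = 0,…,f-2` the segment `2f-2(j+1)-1, …, 2f-2` (which is the
paper's `s_{2f-2(j+1)} ⋯ s_{2f-1}`). -/
def word4 (f : ℕ) : List ℕ :=
  ((List.range (f - 1)).map (fun j =>
    (List.range (2 * (j + 1))).map (· + (2 * f - 2 * (j + 1) - 1)))).flatten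

/-!
In 0-based letters a segment `sw c, sw (c+1), …, sw (2f-2)` of the word acts as the cycle
`c ↦ 2f - 1`, `x ↦ x - 1` for `c < x < 2f`. Composing the segments one by one, each partial
product is an explicit zigzag on a final window `[c, 2f)`, and the last one is `d_0`.

The inversions of `d_0` are the pairs `(2a+1, 2b+1)` and `(2a+1, 2b)` with `a < b < f`
(0-based), so they are in bijection with the ordered pairs of distinct `a, b < f`; there
are `f(f-1)` of them, as many as letters in the word, which is therefore reduced.
-/

lemma sw_apply (a x : ℕ) : sw a x = if x = a then a + 1 else if x = a + 1 then a else x := by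
  simp [sw, Equiv.swap_apply_def]

def shiftCycle (a n x : ℕ) : ℕ :=
  if x = a ∧ 0 < n then a + n else if a < x ∧ x ≤ a + n then x - 1 else x

lemma prod_map_sw_reverse_range_add (a n x : ℕ) :
    (((List.range n).map (· + a)).reverse.map sw).prod x = shiftCycle a n x := by
  induction n generalizing x with
  | zero =>
    simp only [List.range_zero, List.map_nil, List.reverse_nil, List.prod_nil,
      Equiv.Perm.one_apply, shiftCycle]
    split_ifs <;> omega
  | succ n ih =>
    simp only [List.range_succ, List.map_append, List.reverse_append, List.map_cons,
      List.map_nil, List.reverse_cons, List.reverse_nil, List.nil_append,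
      List.singleton_append, List.prod_cons, Equiv.Perm.mul_apply, ih, sw_apply, shiftCycle]
    split_ifs <;> omega

def wordSegment (f j : ℕ) : List ℕ :=
  (List.range (2 * (j + 1))).map (· + (2 * f - 2 * (j + 1) - 1))

def wordPrefix (f m : ℕ) : List ℕ := ((List.range m).map (wordSegment f)).flatten

lemma wordPrefix_succ (f m : ℕ) : wordPrefix f (m + 1) = wordPrefix f m ++ wordSegment f m := by
  simp [wordPrefix, List.range_succ]

lemma word4_eq_wordPrefix (f : ℕ) : word4 f = wordPrefix f (f - 1) := rfl

/-- On the window `[c, 2f)`, `c = 2f - 2m - 1`: `c + 2i + 1 ↦ c + i` and `c + 2i ↦ 2f - 1 - i`. -/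
def prefixPerm (f m x : ℕ) : ℕ :=
  if x < 2 * f - 2 * m - 1 ∨ 2 * f ≤ x then x
  else if (x - (2 * f - 2 * m - 1)) % 2 = 1 then 2 * f - 2 * m - 1 + (x - (2 * f - 2 * m - 1)) / 2
  else 2 * f - 1 - (x - (2 * f - 2 * m - 1)) / 2

lemma prod_wordPrefix_apply (f : ℕ) {m : ℕ} (hm : m ≤ f - 1) (x : ℕ) :
    ((wordPrefix f m).reverse.map sw).prod x = prefixPerm f m x := by
  induction m generalizing x with
  | zero =>
    simp only [wordPrefix, List.range_zero, List.map_nil, List.flatten_nil, List.reverse_nil,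
      List.prod_nil, Equiv.Perm.one_apply, prefixPerm]
    split_ifs <;> omega
  | succ m ih =>
    rw [wordPrefix_succ, List.reverse_append, List.map_append, List.prod_append,
      Equiv.Perm.mul_apply, ih (by omega), wordSegment, prod_map_sw_reverse_range_add]
    simp only [shiftCycle, prefixPerm]
    split_ifs <;> omega

lemma length_wordPrefix (f m : ℕ) : (wordPrefix f m).length = m * (m + 1) := by
  induction m with
  | zero => rfl
  | succ m ih =>
    rw [wordPrefix_succ, List.length_append, ih, wordSegment, List.length_map, List.length_range]
    ring

def zigzag (f x : ℕ) : ℕ := if 2 * f ≤ x then x else if x % 2 = 0 then x / 2 else 2 * f - 1 - x / 2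

lemma prefixPerm_pred (f x : ℕ) : prefixPerm f (f - 1) x = zigzag f x := by
  simp only [prefixPerm, zigzag]
  split_ifs <;> omega

def inversionOfPair (p : ℕ × ℕ) : ℕ × ℕ :=
  if p.1 < p.2 then (2 * p.1 + 1, 2 * p.2 + 1) else (2 * p.2 + 1, 2 * p.1)

lemma inversionOfPair_injective : Function.Injective inversionOfPair := by
  intro p q h
  simp only [inversionOfPair] at h
  split_ifs at h <;> simp only [Prod.mk.injEq] at h <;> ext <;> omega

lemma zigzag_inversions (f : ℕ) :
    {p : ℕ × ℕ | p.1 < p.2 ∧ zigzag f p.2 < zigzag f p.1} =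
      inversionOfPair '' ↑(Finset.range f).offDiag := by
  ext ⟨x, y⟩
  simp only [Set.mem_ofPred_eq, Set.mem_image, Finset.mem_coe, Finset.mem_offDiag,
    Finset.mem_range, zigzag, inversionOfPair]
  constructor
  · rintro ⟨hxy, hinv⟩
    refine ⟨if y % 2 = 0 then (y / 2, x / 2) else (x / 2, y / 2), ?_⟩
    split_ifs at hinv ⊢ <;> simp only [Prod.mk.injEq] <;> omega
  · rintro ⟨⟨a, b⟩, ⟨ha, hb, hab⟩, hpair⟩
    split_ifs at hpair <;> simp only [Prod.mk.injEq] at hpair <;> obtain ⟨rfl, rfl⟩ := hpair <;>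
      split_ifs <;> omega

lemma ncard_zigzag_inversions (f : ℕ) :
    {p : ℕ × ℕ | p.1 < p.2 ∧ zigzag f p.2 < zigzag f p.1}.ncard = f * (f - 1) := by
  rw [zigzag_inversions, Set.ncard_image_of_injective _ inversionOfPair_injective,
    Set.ncard_coe_finset, Finset.offDiag_card, Finset.card_range, Nat.mul_sub_one]

lemma coe_eq_zigzag {f : ℕ} (σ : Equiv.Perm ℕ) (hfix : ∀ x, 2 * f ≤ x → σ x = x)
    (he : ∀ k, k < f → σ (2 * k) = k) (ho : ∀ k, k < f → σ (2 * k + 1) = 2 * f - 1 - k) :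
    ⇑σ = zigzag f := by
  funext x
  by_cases hx : 2 * f ≤ x
  · rw [hfix x hx, zigzag, if_pos hx]
  obtain ⟨k, rfl | rfl⟩ := Nat.even_or_odd' x
  · rw [he k (by omega), zigzag, if_neg hx, if_pos (by omega)]
    omega
  · rw [ho k (by omega), zigzag, if_neg hx, if_neg (by omega)]
    omega

theorem stmt4_general (f : ℕ) (d0 : Equiv.Perm ℕ)
    (hfix : ∀ x, 2 * f ≤ x → d0 x = x)
    (he : ∀ k, k < f → d0 (2 * k) = k)
    (ho : ∀ k, k < f → d0 (2 * k + 1) = 2 * f - 1 - k) :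
    len d0 = f * (f - 1) ∧
    d0 = (((word4 f).reverse).map sw).prod ∧
    (word4 f).length = f * (f - 1) := by
  have hd0 : ⇑d0 = zigzag f := coe_eq_zigzag d0 hfix he ho
  refine ⟨?_, ?_, ?_⟩
  · rw [len, hd0, ncard_zigzag_inversions]
  · ext x
    rw [hd0, word4_eq_wordPrefix, prod_wordPrefix_apply f le_rfl, prefixPerm_pred]
  · rw [word4_eq_wordPrefix, length_wordPrefix]
    cases f <;> simp [mul_comm]

theorem stmt4 (f : ℕ) (hf : 1 ≤ f) (d0 : Equiv.Perm ℕ)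
    (hfix : ∀ x, 2 * f ≤ x → d0 x = x)
    (he : ∀ k, k < f → d0 (2 * k) = k)
    (ho : ∀ k, k < f → d0 (2 * k + 1) = 2 * f - 1 - k) :
    len d0 = f * (f - 1) ∧
    d0 = (((word4 f).reverse).map sw).prod ∧
    (word4 f).length = f * (f - 1) :=
  stmt4_general f d0 hfix he ho
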